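/- For any HOL term M of HOL type A, with free type variables α1,…,αn and free term variables x1:A1,…,xn:An, the translation of M is well-typed at the translated type: Σ | α1:type,…,αn:type, x1:||A1||,…,xn:||An|| ⊢ |M| : ||A|| holds in the λΠ-calculus modulo rewriting. -/

import Mathlib

set_option autoImplicit false

namespace HolDk

/-! ### Dedukti: the λΠ-calculus modulo rewriting, with de Bruijn indices.

Terms `M, N, A, B ::= x | c | Type | Kind | Πx:A.B | λx:A.M | M N`. -/

inductive DTm : Type
  | var   : ℕ → DTm
  | const : ℕ → DTm
  | type  : DTm
  | kind  : DTm
  | pi    : DTm → DTm → DTm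
  | lam   : DTm → DTm → DTm
  | app   : DTm → DTm → DTm
  deriving DecidableEq

namespace DTm

/-- Shift the free de Bruijn indices `≥ c` up by `d`. -/
def shift (d : ℕ) : ℕ → DTm → DTm
  | c, var n => if n < c then var n else var (n + d)
  | _, const k => const k
  | _, type => type
  | _, kind => kind
  | c, pi A B => pi (shift d c A) (shift d (c+1) B)
  | c, lam A M => lam (shift d c A) (shift d (c+1) M)
  | c, app M N => app (shift d c M) (shift d c N)

/-- Lift a simultaneous substitution under one binder. -/
def liftSub (σ : ℕ → DTm) : ℕ → DTm
  | 0 => var 0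
  | n+1 => shift 1 0 (σ n)

/-- Simultaneous substitution. -/
def subst (σ : ℕ → DTm) : DTm → DTm
  | var n => σ n
  | const k => const k
  | type => type
  | kind => kind
  | pi A B => pi (subst σ A) (subst (liftSub σ) B)
  | lam A M => lam (subst σ A) (subst (liftSub σ) M)
  | app M N => app (subst σ M) (subst σ N)

/-- Substitution `[N/x]M` of `N` for the de Bruijn index `0` in `M`. -/
def subst0 (M N : DTm) : DTm :=
  subst (fun n => match n with | 0 => N | n+1 => var n) M

/-- Non-dependent product `A → B`. -/
def arr (A B : DTm) : DTm := pi A (shift 1 0 B)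

end DTm

/-- Signatures `Σ ::= · | Σ, c : A | Σ, [Γ] M ⇝ N`. -/
inductive Sig : Type
  | empty : Sig
  | pushConst : Sig → ℕ → DTm → Sig
  | pushRule : Sig → List DTm → DTm → DTm → Sig

/-- Lookup of the type of a constant in a signature. -/
def Sig.constType : Sig → ℕ → Option DTm
  | .empty, _ => none
  | .pushConst S c A, d => if d = c then some A else S.constType d
  | .pushRule S _ _ _, d => S.constType d

/-- Membership of a rewrite rule `[Γ] M ⇝ N` in a signature. -/
def Sig.hasRule : Sig → List DTm → DTm → DTm → Prop
  | .empty, _, _, _ => False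
  | .pushConst S _ _, G, M, N => S.hasRule G M N
  | .pushRule S G' M' N', G, M, N => (G = G' ∧ M = M' ∧ N = N') ∨ S.hasRule G M N

/-- Pure β-reduction (one step, contextual closure). -/
inductive RedBeta : DTm → DTm → Prop
  | beta (A M N) : RedBeta (.app (.lam A M) N) (M.subst0 N)
  | appL {M M'} (N) : RedBeta M M' → RedBeta (.app M N) (.app M' N)
  | appR (M) {N N'} : RedBeta N N' → RedBeta (.app M N) (.app M N')
  | lamTy {A A'} (M) : RedBeta A A' → RedBeta (.lam A M) (.lam A' M)
  | lamBody (A) {M M'} : RedBeta M M' → RedBeta (.lam A M) (.lam A M')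
  | piL {A A'} (B) : RedBeta A A' → RedBeta (.pi A B) (.pi A' B)
  | piR (A) {B B'} : RedBeta B B' → RedBeta (.pi A B) (.pi A B')

/-- The reduction relation `→βΣ`: β-reduction together with the rewrite rules of
the signature (one step, contextual closure). -/
inductive Red (S : Sig) : DTm → DTm → Prop
  | beta (A M N) : Red S (.app (.lam A M) N) (M.subst0 N)
  | rew {G L R} (σ : ℕ → DTm) : S.hasRule G L R → Red S (L.subst σ) (R.subst σ)
  | appL {M M'} (N) : Red S M M' → Red S (.app M N) (.app M' N)
  | appR (M) {N N'} : Red S N N' → Red S (.app M N) (.app M N')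
  | lamTy {A A'} (M) : Red S A A' → Red S (.lam A M) (.lam A' M)
  | lamBody (A) {M M'} : Red S M M' → Red S (.lam A M) (.lam A M')
  | piL {A A'} (B) : Red S A A' → Red S (.pi A B) (.pi A' B)
  | piR (A) {B B'} : Red S B B' → Red S (.pi A B) (.pi A B')

/-- The conversion `≡βΣ`: reflexive symmetric transitive closure of `→βΣ`. -/
def Conv (S : Sig) : DTm → DTm → Prop := Relation.EqvGen (Red S)

mutual
/-- Signature formation `Σ signature`. -/
inductive SigWf : Sig → Prop
  | empty : SigWf .empty
  | pushConst {S : Sig} {c : ℕ} {A s : DTm} : SigWf S → Typed S [] A s →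
      (s = DTm.type ∨ s = DTm.kind) → S.constType c = none →
      SigWf (S.pushConst c A)
  | pushRule {S : Sig} {G : List DTm} {M N A : DTm} : SigWf S →
      Typed S G M A → Typed S G N A → SigWf (S.pushRule G M N)

/-- Context formation `Σ | Γ context` (contexts are lists, head = most recent binding). -/
inductive CtxWf : Sig → List DTm → Prop
  | nil {S : Sig} : SigWf S → CtxWf S []
  | cons {S : Sig} {G : List DTm} {A : DTm} : CtxWf S G → Typed S G A DTm.type →
      CtxWf S (A :: G)

/-- The typing judgment `Σ | Γ ⊢ M : A` of the λΠ-calculus modulo rewriting. -/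
inductive Typed : Sig → List DTm → DTm → DTm → Prop
  | var {S : Sig} {G : List DTm} {n : ℕ} {A : DTm} : CtxWf S G → G[n]? = some A →
      Typed S G (.var n) (A.shift (n+1) 0)
  | const {S : Sig} {G : List DTm} {c : ℕ} {A : DTm} : CtxWf S G →
      S.constType c = some A → Typed S G (.const c) A
  | type {S : Sig} {G : List DTm} : CtxWf S G → Typed S G .type .kind
  | prod {S : Sig} {G : List DTm} {A B s : DTm} : Typed S G A .type →
      Typed S (A :: G) B s → (s = DTm.type ∨ s = DTm.kind) → Typed S G (.pi A B) s
  | abs {S : Sig} {G : List DTm} {A M B : DTm} : Typed S G A .type →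
      Typed S (A :: G) M B → Typed S G (.lam A M) (.pi A B)
  | app {S : Sig} {G : List DTm} {M N A B : DTm} : Typed S G M (.pi A B) →
      Typed S G N A → Typed S G (.app M N) (B.subst0 N)
  | conv {S : Sig} {G : List DTm} {M A B : DTm} : Typed S G M A →
      Typed S G B DTm.type → Conv S A B → Typed S G M B
end

/-! ### HOL -/

/-- HOL types: type variables, `bool`, `ind`, and arrow types. -/
inductive HTy : Type
  | tvar : ℕ → HTy
  | bool : HTy
  | ind  : HTy
  | arr  : HTy → HTy → HTy
  deriving DecidableEq

/-- HOL terms (simply typed λ-terms, de Bruijn indices for term variables),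
with the polymorphic constants `(=_A)` and `select_A`. -/
inductive HTm : Type
  | var    : ℕ → HTm
  | lam    : HTy → HTm → HTm
  | app    : HTm → HTm → HTm
  | eq     : HTy → HTm
  | select : HTy → HTm
  deriving DecidableEq

/-- The HOL proposition `M = N` (at type `A`), i.e. `(=_A) M N`. -/
def HTm.heq (A : HTy) (M N : HTm) : HTm := .app (.app (.eq A) M) N

/-- HOL typing: `Δ ⊢ M : A` where `Δ` types the term variables. -/
inductive HTyped : List HTy → HTm → HTy → Prop
  | var {D : List HTy} {n : ℕ} {A : HTy} : D[n]? = some A → HTyped D (.var n) A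
  | lam {D : List HTy} {A B : HTy} {M : HTm} : HTyped (A :: D) M B →
      HTyped D (.lam A M) (A.arr B)
  | app {D : List HTy} {A B : HTy} {M N : HTm} : HTyped D M (A.arr B) →
      HTyped D N A → HTyped D (.app M N) B
  | eq {D : List HTy} {A : HTy} : HTyped D (.eq A) (A.arr (A.arr .bool))
  | select {D : List HTy} {A : HTy} : HTyped D (.select A) ((A.arr .bool).arr A)

namespace HTm

/-- Shift the free term-variable indices `≥ c` up by `d`. -/
def shift (d : ℕ) : ℕ → HTm → HTm
  | c, var n => if n < c then var n else var (n + d)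
  | c, lam A M => lam A (shift d (c+1) M)
  | c, app M N => app (shift d c M) (shift d c N)
  | _, eq A => eq A
  | _, select A => select A

def liftSub (σ : ℕ → HTm) : ℕ → HTm
  | 0 => var 0
  | n+1 => shift 1 0 (σ n)

/-- Simultaneous capture-avoiding substitution of term variables. -/
def substF (σ : ℕ → HTm) : HTm → HTm
  | var n => σ n
  | lam A M => lam A (substF (liftSub σ) M)
  | app M N => app (substF σ M) (substF σ N)
  | eq A => eq A
  | select A => select A

/-- Substitution `[N/x]M` for the de Bruijn index `0`. -/
def subst0 (M N : HTm) : HTm :=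
  substF (fun n => match n with | 0 => N | n+1 => var n) M

/-- Simultaneous (parallel) substitution `M[M₁/x₁, …, Mₙ/xₙ]` given by a list. -/
def substL (σ : List HTm) (M : HTm) : HTm :=
  substF (fun n => (σ[n]?).getD (var n)) M

end HTm

/-- Type substitution `A[A₁/α₁, …, Aₘ/αₘ]` on HOL types. -/
def HTy.tsub (θ : List HTy) : HTy → HTy
  | .tvar n => (θ[n]?).getD (.tvar n)
  | .bool => .bool
  | .ind => .ind
  | .arr A B => .arr (A.tsub θ) (B.tsub θ)

/-- Type substitution on HOL terms. -/
def HTm.tsub (θ : List HTy) : HTm → HTm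
  | .var n => .var n
  | .lam A M => .lam (A.tsub θ) (M.tsub θ)
  | .app M N => .app (M.tsub θ) (N.tsub θ)
  | .eq A => .eq (A.tsub θ)
  | .select A => .select (A.tsub θ)

/-- All free type variables of a HOL type are `< n`. -/
def HTy.tvLt (n : ℕ) : HTy → Prop
  | .tvar j => j < n
  | .bool => True
  | .ind => True
  | .arr A B => A.tvLt n ∧ B.tvLt n

/-- All free type variables of a HOL term are `< n`. -/
def HTm.tvLt (n : ℕ) : HTm → Prop
  | .var _ => True
  | .lam A M => A.tvLt n ∧ M.tvLt n
  | .app M N => M.tvLt n ∧ N.tvLt n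
  | .eq A => A.tvLt n
  | .select A => A.tvLt n

/-- One-step β-reduction of HOL terms (contextual closure). -/
inductive HBeta : HTm → HTm → Prop
  | beta (A : HTy) (M N : HTm) : HBeta (.app (.lam A M) N) (M.subst0 N)
  | appL {M M'} (N) : HBeta M M' → HBeta (.app M N) (.app M' N)
  | appR (M) {N N'} : HBeta N N' → HBeta (.app M N) (.app M N')
  | lamBody (A) {M M'} : HBeta M M' → HBeta (.lam A M) (.lam A M')

/-- HOL derivations `Γ ⊢ φ` (Fig. 2), in an ambient term-variable context `Δ`,
with hypotheses `Γ` a finite set of propositions.  The `Subst` rule is split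
into a type-substitution rule and a term-substitution rule. -/
inductive HDeriv : List HTy → Finset HTm → HTm → Type
  | refl {D : List HTy} (A : HTy) (M : HTm) :
      HTyped D M A → HDeriv D ∅ (HTm.heq A M M)
  | absThm {D : List HTy} {G : Finset HTm} (A B : HTy) (M N : HTm) :
      HDeriv (A :: D) (G.image (HTm.shift 1 0)) (HTm.heq B M N) →
      HDeriv D G (HTm.heq (A.arr B) (.lam A M) (.lam A N))
  | appThm {D : List HTy} {G G' : Finset HTm} (A B : HTy) (F Gt M N : HTm) :
      HDeriv D G (HTm.heq (A.arr B) F Gt) → HDeriv D G' (HTm.heq A M N) →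
      HDeriv D (G ∪ G') (HTm.heq B (F.app M) (Gt.app N))
  | beta {D : List HTy} (A B : HTy) (M : HTm) :
      HTyped (A :: D) M B →
      HDeriv (A :: D) ∅ (HTm.heq B (.app (.lam A (M.shift 1 1)) (.var 0)) M)
  | assume {D : List HTy} (φ : HTm) : HTyped D φ .bool → HDeriv D {φ} φ
  | eqMp {D : List HTy} {G G' : Finset HTm} (φ ψ : HTm) :
      HDeriv D G (HTm.heq .bool φ ψ) → HDeriv D G' φ →
      HDeriv D (G ∪ G') ψ
  | deductAntiSym {D : List HTy} {G G' : Finset HTm} (φ ψ : HTm) :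
      HDeriv D G φ → HDeriv D G' ψ →
      HDeriv D (G.erase ψ ∪ G'.erase φ) (HTm.heq .bool φ ψ)
  | typeSubst {D : List HTy} {G : Finset HTm} {φ : HTm} (θ : List HTy) :
      HDeriv D G φ →
      HDeriv (D.map (HTy.tsub θ)) (G.image (HTm.tsub θ)) (φ.tsub θ)
  | termSubst {D : List HTy} {G : Finset HTm} {φ : HTm} {D' : List HTy} (σ : List HTm) :
      σ.length = D.length →
      (∀ (i : ℕ) (A : HTy), D[i]? = some A → ∃ t, σ[i]? = some t ∧ HTyped D' t A) →
      HDeriv D G φ →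
      HDeriv D' (G.image (HTm.substL σ)) (HTm.substL σ φ)

/-! ### The Dedukti signature Σ for HOL -/

def cTy : DTm := .const 0
def dBool : DTm := .const 1
def dInd : DTm := .const 2
def tArr (a b : DTm) : DTm := .app (.app (.const 3) a) b
def tTerm (a : DTm) : DTm := .app (.const 4) a
def tEq (a x y : DTm) : DTm := .app (.app (.app (.const 5) a) x) y
def tProof (p : DTm) : DTm := .app (.const 7) p
def dRefl : DTm := .const 8
def dFunExt : DTm := .const 9
def dAppThm : DTm := .const 10
def dPropExt : DTm := .const 11
def dEqMp : DTm := .const 12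
def dImp : DTm := .const 13
def dForall : DTm := .const 14

def tyArrow : DTm := DTm.arr cTy (DTm.arr cTy cTy)
def tyTerm : DTm := DTm.arr cTy .type
def tyEq : DTm := .pi cTy (tTerm (tArr (.var 0) (tArr (.var 0) dBool)))
def tySelect : DTm := .pi cTy (tTerm (tArr (tArr (.var 0) dBool) (.var 0)))
def tyProof : DTm := DTm.arr (tTerm dBool) .type
def tyRefl : DTm :=
  .pi cTy (.pi (tTerm (.var 0)) (tProof (tEq (.var 1) (.var 0) (.var 0))))
def tyFunExt : DTm :=
  .pi cTy (.pi cTy (.pi (tTerm (tArr (.var 1) (.var 0))) (.pi (tTerm (tArr (.var 2) (.var 1)))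
    (DTm.arr
      (.pi (tTerm (.var 3))
        (tProof (tEq (.var 3) (.app (.var 2) (.var 0)) (.app (.var 1) (.var 0)))))
      (tProof (tEq (tArr (.var 3) (.var 2)) (.var 1) (.var 0)))))))
def tyAppThm : DTm :=
  .pi cTy (.pi cTy (.pi (tTerm (tArr (.var 1) (.var 0))) (.pi (tTerm (tArr (.var 2) (.var 1)))
    (.pi (tTerm (.var 3)) (.pi (tTerm (.var 4))
      (DTm.arr (tProof (tEq (tArr (.var 5) (.var 4)) (.var 3) (.var 2)))
        (DTm.arr (tProof (tEq (.var 5) (.var 1) (.var 0)))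
          (tProof (tEq (.var 4) (.app (.var 3) (.var 1)) (.app (.var 2) (.var 0)))))))))))
def tyPropExt : DTm :=
  .pi (tTerm dBool) (.pi (tTerm dBool)
    (DTm.arr (DTm.arr (tProof (.var 0)) (tProof (.var 1)))
      (DTm.arr (DTm.arr (tProof (.var 0)) (tProof (.var 1)))
        (tProof (tEq dBool (.var 1) (.var 0))))))
def tyEqMp : DTm :=
  .pi (tTerm dBool) (.pi (tTerm dBool)
    (DTm.arr (tProof (tEq dBool (.var 1) (.var 0)))
      (DTm.arr (tProof (.var 1)) (tProof (.var 0)))))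

/-- The rewrite rule `[α : type, β : type] term (arrow α β) ⇝ term α → term β`
(in the context list, the head is the most recent variable `β`). -/
def arrowRuleCtx : List DTm := [cTy, cTy]
def arrowRuleL : DTm := tTerm (tArr (.var 1) (.var 0))
def arrowRuleR : DTm := DTm.arr (tTerm (.var 1)) (tTerm (.var 0))

def baseSig : Sig :=
  ((((Sig.empty.pushConst 0 .type).pushConst 1 cTy).pushConst 2 cTy).pushConst 3
    tyArrow).pushConst 4 tyTerm

/-- The HOL signature Σ:
`type : Type`, `bool ind : type`, `arrow : type → type → type`, `term : type → Type`,
`eq`, `select`, the rewrite rule `term (arrow α β) ⇝ term α → term β`,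
`proof : term bool → Type`, and `Refl`, `FunExt`, `AppThm`, `PropExt`, `EqMp`. -/
def holSig : Sig :=
  ((((((((baseSig.pushConst 5 tyEq).pushConst 6 tySelect).pushRule arrowRuleCtx
    arrowRuleL arrowRuleR).pushConst 7 tyProof).pushConst 8 tyRefl).pushConst 9
    tyFunExt).pushConst 10 tyAppThm).pushConst 11 tyPropExt).pushConst 12 tyEqMp

/-! ### The translation -/

/-- Translation `|A|` of a HOL type as a Dedukti term; `ρ` gives the Dedukti
de Bruijn index of each HOL type variable. -/
def transTy (ρ : ℕ → ℕ) : HTy → DTm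
  | .tvar j => .var (ρ j)
  | .bool => dBool
  | .ind => dInd
  | .arr A B => tArr (transTy ρ A) (transTy ρ B)

/-- Lift a variable renaming under one binder. -/
def liftVar (ρ : ℕ → ℕ) : ℕ → ℕ
  | 0 => 0
  | n+1 => ρ n + 1

/-- Translation `|M|` of a HOL term as a Dedukti term; `ρT`, `ρt` give the
Dedukti de Bruijn indices of the free HOL type resp. term variables. -/
def transTm (ρT ρt : ℕ → ℕ) : HTm → DTm
  | .var i => .var (ρt i)
  | .lam A M => .lam (tTerm (transTy ρT A)) (transTm (fun j => ρT j + 1) (liftVar ρt) M)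
  | .app M N => .app (transTm ρT ρt M) (transTm ρT ρt N)
  | .eq A => .app (.const 5) (transTy ρT A)
  | .select A => .app (.const 6) (transTy ρT A)

/-- The Dedukti context `x₁ : ‖A₁‖, …, xₖ : ‖Aₖ‖` translating a HOL
term-variable context (to be placed in front of the `n` type variables). -/
def dTermCtx : List HTy → List DTm
  | [] => []
  | A :: D => tTerm (transTy (fun j => D.length + j) A) :: dTermCtx D

/-- The Dedukti context `‖Γ‖ = h₁ : ‖φ₁‖, …` translating HOL hypotheses;
`k` is the number of HOL term variables in scope. -/
def hypCtx (k : ℕ) : List HTm → List DTm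
  | [] => []
  | φ :: rest =>
      tProof (transTm (fun j => rest.length + k + j) (fun i => rest.length + i) φ) ::
        hypCtx k rest

def mkApps (f : DTm) (args : List DTm) : DTm := args.foldl .app f

def mkTyLams : ℕ → DTm → DTm
  | 0, M => M
  | n+1, M => .lam cTy (mkTyLams n M)

/-- `λx₁ : ‖B₁‖. … λxₖ : ‖Bₖ‖. M` (the head of the list is the innermost binder). -/
def bindTerms (ρT : ℕ → ℕ) : List HTy → DTm → DTm
  | [], M => M
  | A :: D, M => bindTerms ρT D (.lam (tTerm (transTy (fun j => ρT j + D.length) A)) M)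

/-- Translation `|𝒟|` of a HOL derivation as a Dedukti proof term; `ρT`, `ρt`
give the Dedukti indices of free HOL type/term variables, and `ρh` gives the
index of the hypothesis variable `h_φ` for each hypothesis `φ`. -/
def transDeriv : {D : List HTy} → {G : Finset HTm} → {φ : HTm} →
    (ρT ρt : ℕ → ℕ) → (ρh : HTm → ℕ) → HDeriv D G φ → DTm
  | _, _, _, ρT, ρt, _, .refl A M _ =>
      .app (.app dRefl (transTy ρT A)) (transTm ρT ρt M)
  | _, _, _, ρT, ρt, ρh, .absThm A B M N d =>
      .app (.app (.app (.app (.app dFunExt (transTy ρT A)) (transTy ρT B))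
          (transTm ρT ρt (.lam A M))) (transTm ρT ρt (.lam A N)))
        (.lam (tTerm (transTy ρT A))
          (transDeriv (fun j => ρT j + 1) (liftVar ρt)
            (fun χ => ρh (HTm.substF (fun i => .var (i - 1)) χ) + 1) d))
  | _, _, _, ρT, ρt, ρh, .appThm A B F Gt M N d1 d2 =>
      mkApps dAppThm [transTy ρT A, transTy ρT B, transTm ρT ρt F, transTm ρT ρt Gt,
        transTm ρT ρt M, transTm ρT ρt N,
        transDeriv ρT ρt ρh d1, transDeriv ρT ρt ρh d2]
  | _, _, _, ρT, ρt, _, .beta _ B M _ =>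
      .app (.app dRefl (transTy ρT B)) (transTm ρT ρt M)
  | _, _, _, _, _, ρh, .assume φ _ => .var (ρh φ)
  | _, _, _, ρT, ρt, ρh, .eqMp φ ψ d1 d2 =>
      mkApps dEqMp [transTm ρT ρt φ, transTm ρT ρt ψ,
        transDeriv ρT ρt ρh d1, transDeriv ρT ρt ρh d2]
  | _, _, _, ρT, ρt, ρh, .deductAntiSym φ ψ d1 d2 =>
      mkApps dPropExt [transTm ρT ρt φ, transTm ρT ρt ψ,
        .lam (tProof (transTm ρT ρt ψ))
          (transDeriv (fun j => ρT j + 1) (fun i => ρt i + 1)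
            (fun χ => if χ = ψ then 0 else ρh χ + 1) d1),
        .lam (tProof (transTm ρT ρt φ))
          (transDeriv (fun j => ρT j + 1) (fun i => ρt i + 1)
            (fun χ => if χ = φ then 0 else ρh χ + 1) d2)]
  | _, _, _, ρT, ρt, ρh, .typeSubst θ d =>
      mkApps
        (mkTyLams θ.length
          (transDeriv (fun j => if j < θ.length then j else ρT j + θ.length)
            (fun i => ρt i + θ.length)
            (fun χ => ρh (HTm.tsub θ χ) + θ.length) d))
        (θ.reverse.map (transTy ρT))
  | _, _, _, ρT, ρt, ρh, @HDeriv.termSubst D₀ _ _ _ σ _ _ d =>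
      mkApps
        (bindTerms ρT D₀
          (transDeriv (fun j => ρT j + D₀.length)
            (fun i => if i < D₀.length then i else ρt (i - D₀.length) + D₀.length)
            (fun χ => ρh (HTm.substL σ χ) + D₀.length) d))
        (σ.reverse.map (transTm ρT ρt))

/-- All free type variables appearing in a HOL derivation are `< n`. -/
def HDeriv.tvLt (n : ℕ) : {D : List HTy} → {G : Finset HTm} → {φ : HTm} →
    HDeriv D G φ → Prop
  | _, _, _, .refl A M _ => A.tvLt n ∧ M.tvLt n
  | _, _, _, .absThm A B M N d =>
      A.tvLt n ∧ B.tvLt n ∧ M.tvLt n ∧ N.tvLt n ∧ HDeriv.tvLt n d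
  | _, _, _, .appThm A B F Gt M N d1 d2 =>
      A.tvLt n ∧ B.tvLt n ∧ F.tvLt n ∧ Gt.tvLt n ∧ M.tvLt n ∧ N.tvLt n ∧
        HDeriv.tvLt n d1 ∧ HDeriv.tvLt n d2
  | _, _, _, .beta A B M _ => A.tvLt n ∧ B.tvLt n ∧ M.tvLt n
  | _, _, _, .assume φ _ => φ.tvLt n
  | _, _, _, .eqMp φ ψ d1 d2 => φ.tvLt n ∧ ψ.tvLt n ∧ HDeriv.tvLt n d1 ∧ HDeriv.tvLt n d2
  | _, _, _, .deductAntiSym φ ψ d1 d2 =>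
      φ.tvLt n ∧ ψ.tvLt n ∧ HDeriv.tvLt n d1 ∧ HDeriv.tvLt n d2
  | _, _, _, .typeSubst θ d => (∀ A ∈ θ, A.tvLt n) ∧ HDeriv.tvLt (max θ.length n) d
  | _, _, _, .termSubst σ _ _ d => (∀ t ∈ σ, t.tvLt n) ∧ HDeriv.tvLt n d

/-! The proof is an induction on the HOL typing derivation. Since each type variable is
declared with type `type`, every translated type `|A|` has type `type`, so `‖A‖ = term |A|`
is a type. A translated abstraction gets the product type `Πx : ‖A‖. ‖B‖`, and the rewrite rule
`term (arrow α β) ⇝ term α → term β` converts this to `‖A → B‖`. Applied in the other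
direction, the same conversion gives a translated function a product type, so it can be applied.
Every judgment presupposes that `Σ` is well formed. We check this with a sound type inferencer
that has a bound on its recursion depth and that `decide` evaluates. -/

namespace DTm

theorem subst_liftSub_shift_var {σ : ℕ → DTm} {c : ℕ}
    (hσ : ∀ k, subst σ (shift 1 c (var k)) = var k) (k : ℕ) :
    subst (liftSub σ) (shift 1 (c + 1) (var k)) = var k := by
  cases k with
  | zero => rfl
  | succ k =>
    have hk := hσ k
    by_cases hkc : k < c
    · simp only [shift, hkc, if_true, subst] at hk
      simp [shift, subst, liftSub, hk, hkc]
    · simp only [shift, hkc, if_false, subst] at hk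
      simp [shift, subst, liftSub, hk, hkc]

theorem subst_shift_eq_self : ∀ (M : DTm) {c : ℕ} {σ : ℕ → DTm},
    (∀ k, subst σ (shift 1 c (var k)) = var k) → subst σ (shift 1 c M) = M
  | var k, _, _, hσ => hσ k
  | const _, _, _, _ => rfl
  | type, _, _, _ => rfl
  | kind, _, _, _ => rfl
  | pi A B, _, _, hσ => by
      rw [shift, subst, subst_shift_eq_self A hσ,
        subst_shift_eq_self B (subst_liftSub_shift_var hσ)]
  | lam A M, _, _, hσ => by
      rw [shift, subst, subst_shift_eq_self A hσ,
        subst_shift_eq_self M (subst_liftSub_shift_var hσ)]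
  | app M N, _, _, hσ => by
      rw [shift, subst, subst_shift_eq_self M hσ, subst_shift_eq_self N hσ]

theorem subst0_shift (M N : DTm) : (M.shift 1 0).subst0 N = M :=
  subst_shift_eq_self M fun _ => rfl

end DTm

def betaHead : DTm → Option DTm
  | .app (.lam _ M) N => some (M.subst0 N)
  | _ => none

def arrowRuleHead : DTm → Option DTm
  | .app (.const 4) (.app (.app (.const 3) a) b) => some (.pi (tTerm a) ((tTerm b).shift 1 0))
  | _ => none

def Sig.hasArrowRule : Sig → Bool
  | .empty => false
  | .pushConst S _ _ => S.hasArrowRule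
  | .pushRule S G L R =>
      decide (G = arrowRuleCtx ∧ L = arrowRuleL ∧ R = arrowRuleR) || S.hasArrowRule

theorem Sig.hasRule_of_hasArrowRule :
    ∀ {S : Sig}, S.hasArrowRule → S.hasRule arrowRuleCtx arrowRuleL arrowRuleR
  | .empty, h => nomatch h
  | .pushConst S _ _, h => hasRule_of_hasArrowRule (S := S) h
  | .pushRule S G L R, h => by
      simp only [hasArrowRule, Bool.or_eq_true, decide_eq_true_eq] at h
      rcases h with ⟨rfl, rfl, rfl⟩ | h
      · exact Or.inl ⟨rfl, rfl, rfl⟩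
      · exact Or.inr (hasRule_of_hasArrowRule h)

def headStep (S : Sig) (M : DTm) : Option DTm :=
  (betaHead M).or (if S.hasArrowRule then arrowRuleHead M else none)

def step (S : Sig) : DTm → Option DTm
  | .app M N => (headStep S (.app M N)).or
      (((step S M).map (.app · N)).or ((step S N).map (.app M ·)))
  | .lam A M => ((step S A).map (.lam · M)).or ((step S M).map (.lam A ·))
  | .pi A B => ((step S A).map (.pi · B)).or ((step S B).map (.pi A ·))
  | _ => none

theorem red_of_betaHead_eq_some {S : Sig} :
    ∀ {M M' : DTm}, betaHead M = some M' → Red S M M'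
  | .app (.lam A M) N, _, rfl => .beta A M N

theorem red_of_arrowRuleHead_eq_some {S : Sig}
    (hS : S.hasRule arrowRuleCtx arrowRuleL arrowRuleR) :
    ∀ {M M' : DTm}, arrowRuleHead M = some M' → Red S M M'
  | .app (.const 4) (.app (.app (.const 3) a) b), _, rfl =>
      .rew (fun | 0 => b | 1 => a | n + 2 => .var n) hS

theorem red_of_headStep_eq_some {S : Sig} {M M' : DTm} (h : headStep S M = some M') :
    Red S M M' := by
  rcases Option.or_eq_some_iff.1 h with h | ⟨-, h⟩
  · exact red_of_betaHead_eq_some h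
  · split at h
    · exact red_of_arrowRuleHead_eq_some (Sig.hasRule_of_hasArrowRule ‹_›) h
    · cases h

theorem red_of_step_eq_some {S : Sig} : ∀ {M M' : DTm}, step S M = some M' → Red S M M'
  | .app M N, _, h => by
      simp only [step, Option.or_eq_some_iff, Option.map_eq_some_iff] at h
      rcases h with h | ⟨-, ⟨M', h, rfl⟩ | ⟨-, N', h, rfl⟩⟩
      · exact red_of_headStep_eq_some h
      · exact .appL N (red_of_step_eq_some h)
      · exact .appR M (red_of_step_eq_some h)
  | .lam A M, _, h => by
      simp only [step, Option.or_eq_some_iff, Option.map_eq_some_iff] at h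
      rcases h with ⟨A', h, rfl⟩ | ⟨-, M', h, rfl⟩
      · exact .lamTy M (red_of_step_eq_some h)
      · exact .lamBody A (red_of_step_eq_some h)
  | .pi A B, _, h => by
      simp only [step, Option.or_eq_some_iff, Option.map_eq_some_iff] at h
      rcases h with ⟨A', h, rfl⟩ | ⟨-, B', h, rfl⟩
      · exact .piL B (red_of_step_eq_some h)
      · exact .piR A (red_of_step_eq_some h)

def reduceN (S : Sig) : ℕ → DTm → DTm
  | 0, M => M
  | f + 1, M =>
      match step S M with
      | some M' => reduceN S f M'
      | none => M

theorem conv_reduceN (S : Sig) : ∀ (f : ℕ) (M : DTm), Conv S M (reduceN S f M)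
  | 0, M => .refl M
  | f + 1, M => by
      rw [reduceN]
      split
      · exact .trans _ _ _ (.rel _ _ (red_of_step_eq_some ‹_›)) (conv_reduceN S f _)
      · exact .refl M

theorem conv_of_reduceN_eq {S : Sig} {f : ℕ} {A B : DTm}
    (h : reduceN S f A = reduceN S f B) : Conv S A B :=
  .trans _ _ _ (conv_reduceN S f A) (h ▸ .symm _ _ (conv_reduceN S f B))

/-- At an application the function's type is reduced to a product, and the argument's
inferred type must equal its domain syntactically or have the same `f`-step reduct. -/
def infer (S : Sig) : ℕ → List DTm → DTm → Option DTm
  | 0, _, _ => none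
  | _ + 1, Γ, .var n => Γ[n]?.map (·.shift (n + 1) 0)
  | _ + 1, _, .const c => S.constType c
  | _ + 1, _, .type => some .kind
  | _ + 1, _, .kind => none
  | f + 1, Γ, .pi A B =>
      if infer S f Γ A = some .type then
        (infer S f (A :: Γ) B).filter fun s => s = .type ∨ s = .kind
      else none
  | f + 1, Γ, .lam A M =>
      if infer S f Γ A = some .type then (infer S f (A :: Γ) M).map (.pi A) else none
  | f + 1, Γ, .app M N =>
      match infer S f Γ M, infer S f Γ N with
      | some T, some A' =>
          match reduceN S f T with
          | .pi A B =>
              if (T = .pi A B ∨ infer S f Γ (.pi A B) = some .type) ∧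
                  (A' = A ∨ reduceN S f A' = reduceN S f A ∧ infer S f Γ A = some .type)
              then some (B.subst0 N) else none
          | _ => none
      | _, _ => none

theorem Typed.retype {S : Sig} {Γ : List DTm} {M T U : DTm} (hM : Typed S Γ M T)
    (h : T = U ∨ Conv S T U ∧ Typed S Γ U .type) : Typed S Γ M U := by
  rcases h with rfl | ⟨hTU, hU⟩
  · exact hM
  · exact .conv hM hU hTU

theorem typed_of_infer_eq_some {S : Sig} :
    ∀ {f : ℕ} {Γ : List DTm} {M A : DTm}, infer S f Γ M = some A → CtxWf S Γ → Typed S Γ M A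
  | 0, _, _, _, h, _ => nomatch h
  | f + 1, Γ, .var n, _, h, hΓ => by
      obtain ⟨B, hB, rfl⟩ := Option.map_eq_some_iff.1 h
      exact .var hΓ hB
  | f + 1, _, .const c, _, h, hΓ => .const hΓ h
  | f + 1, _, .type, _, rfl, hΓ => .type hΓ
  | f + 1, Γ, .pi A B, s, h, hΓ => by
      rw [infer] at h
      split at h <;> try contradiction
      have hA := typed_of_infer_eq_some ‹_› hΓ
      obtain ⟨hB, hs⟩ := Option.filter_eq_some_iff.1 h
      exact .prod hA (typed_of_infer_eq_some hB (.cons hΓ hA)) (of_decide_eq_true hs)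
  | f + 1, Γ, .lam A M, _, h, hΓ => by
      rw [infer] at h
      split at h <;> try contradiction
      have hA := typed_of_infer_eq_some ‹_› hΓ
      obtain ⟨B, hB, rfl⟩ := Option.map_eq_some_iff.1 h
      exact .abs hA (typed_of_infer_eq_some hB (.cons hΓ hA))
  | f + 1, Γ, .app M N, _, h, hΓ => by
      rw [infer] at h
      split at h <;> try contradiction
      rename_i T A' hT hA'
      split at h <;> try contradiction
      rename_i A B hred
      split at h <;> try contradiction
      rename_i hconv
      cases h
      obtain ⟨hpi, hdom⟩ := hconv
      have hM : Typed S Γ M (.pi A B) := (typed_of_infer_eq_some hT hΓ).retype <|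
        hpi.imp_right fun hpi => ⟨hred ▸ conv_reduceN S f T, typed_of_infer_eq_some hpi hΓ⟩
      have hN : Typed S Γ N A := (typed_of_infer_eq_some hA' hΓ).retype <|
        hdom.imp_right fun hdom => ⟨conv_of_reduceN_eq hdom.1, typed_of_infer_eq_some hdom.2 hΓ⟩
      exact .app hM hN

def ctxCheck (S : Sig) (f : ℕ) : List DTm → Bool
  | [] => true
  | A :: Γ => ctxCheck S f Γ && decide (infer S f Γ A = some .type)

def Sig.check (f : ℕ) : Sig → Bool
  | .empty => true
  | .pushConst S c A =>
      S.check f && decide (infer S f [] A = some .type ∨ infer S f [] A = some .kind) &&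
        decide (S.constType c = none)
  | .pushRule S Γ L R =>
      S.check f && ctxCheck S f Γ && decide ((infer S f Γ L).isSome ∧ infer S f Γ L = infer S f Γ R)

theorem ctxWf_of_ctxCheck {S : Sig} {f : ℕ} (hS : SigWf S) :
    ∀ {Γ : List DTm}, ctxCheck S f Γ → CtxWf S Γ
  | [], _ => .nil hS
  | A :: Γ, h => by
      simp only [ctxCheck, Bool.and_eq_true, decide_eq_true_eq] at h
      have hΓ := ctxWf_of_ctxCheck hS h.1
      exact .cons hΓ (typed_of_infer_eq_some h.2 hΓ)

theorem Sig.sigWf_of_check {f : ℕ} : ∀ {S : Sig}, S.check f → SigWf S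
  | .empty, _ => .empty
  | .pushConst S c A, h => by
      simp only [check, Bool.and_eq_true, decide_eq_true_eq] at h
      obtain ⟨⟨hS, hA⟩, hc⟩ := h
      have hS := sigWf_of_check hS
      rcases hA with hA | hA
      · exact .pushConst hS (typed_of_infer_eq_some hA (.nil hS)) (.inl rfl) hc
      · exact .pushConst hS (typed_of_infer_eq_some hA (.nil hS)) (.inr rfl) hc
  | .pushRule S Γ L R, h => by
      simp only [check, Bool.and_eq_true, decide_eq_true_eq] at h
      obtain ⟨⟨hS, hΓ⟩, hL, hLR⟩ := h
      have hS := sigWf_of_check hS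
      have hΓ := ctxWf_of_ctxCheck hS hΓ
      obtain ⟨A, hA⟩ := Option.isSome_iff_exists.1 hL
      exact .pushRule hS (typed_of_infer_eq_some hA hΓ) (typed_of_infer_eq_some (hLR ▸ hA) hΓ)

theorem sigWf_holSig : SigWf holSig :=
  Sig.sigWf_of_check (f := 40) (by decide)

theorem HTyped.tvLt_type {n : ℕ} {D : List HTy} {M : HTm} {A : HTy} (ht : HTyped D M A) :
    M.tvLt n → (∀ B ∈ D, B.tvLt n) → A.tvLt n := by
  induction ht with
  | var h => exact fun _ hD => hD _ (List.mem_of_getElem? h)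
  | lam _ ih => exact fun hM hD => ⟨hM.1, ih hM.2 (List.forall_mem_cons.2 ⟨hM.1, hD⟩)⟩
  | app _ _ ih _ => exact fun hM hD => (ih hM.1 hD).2
  | eq => exact fun hA _ => ⟨hA, hA, trivial⟩
  | select => exact fun hA _ => ⟨⟨hA, trivial⟩, hA⟩

theorem shift_transTy (d : ℕ) (ρ : ℕ → ℕ) :
    ∀ A : HTy, (transTy ρ A).shift d 0 = transTy (fun j => ρ j + d) A
  | .tvar _ => rfl
  | .bool => rfl
  | .ind => rfl
  | .arr A B => by
      simp only [transTy, tArr, DTm.shift, shift_transTy d ρ A, shift_transTy d ρ B]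

theorem shift_tTerm_transTy (d : ℕ) (ρ : ℕ → ℕ) (A : HTy) :
    (tTerm (transTy ρ A)).shift d 0 = tTerm (transTy (fun j => ρ j + d) A) := by
  simp only [tTerm, DTm.shift, shift_transTy]

theorem conv_tTerm_tArr (a b : DTm) :
    Conv holSig (tTerm (tArr a b)) (.pi (tTerm a) ((tTerm b).shift 1 0)) :=
  .rel _ _ (red_of_arrowRuleHead_eq_some (Sig.hasRule_of_hasArrowRule rfl) rfl)

section TranslatedTypes

variable {G : List DTm} {ρ : ℕ → ℕ} {n : ℕ}

theorem typed_tTerm (hG : CtxWf holSig G) {a : DTm} (ha : Typed holSig G a cTy) :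
    Typed holSig G (tTerm a) .type :=
  have hterm : Typed holSig G (.const 4) tyTerm := .const hG rfl
  .app hterm ha

theorem typed_transTy (hG : CtxWf holSig G) (hρ : ∀ j < n, G[ρ j]? = some cTy) :
    ∀ {A : HTy}, A.tvLt n → Typed holSig G (transTy ρ A) cTy
  | .tvar j, hj => .var hG (hρ j hj)
  | .bool, _ => .const hG rfl
  | .ind, _ => .const hG rfl
  | .arr _ _, hAB =>
    have harrow : Typed holSig G (.const 3) tyArrow := .const hG rfl
    .app (.app harrow (typed_transTy hG hρ hAB.1)) (typed_transTy hG hρ hAB.2)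

theorem typed_pi_tTerm_transTy (hG : CtxWf holSig G) (hρ : ∀ j < n, G[ρ j]? = some cTy)
    {A B : HTy} (hA : A.tvLt n) (hB : B.tvLt n) :
    Typed holSig G (.pi (tTerm (transTy ρ A)) ((tTerm (transTy ρ B)).shift 1 0)) .type := by
  have hdom := typed_tTerm hG (typed_transTy hG hρ hA)
  have hG' : CtxWf holSig (tTerm (transTy ρ A) :: G) := .cons hG hdom
  rw [shift_tTerm_transTy]
  exact .prod hdom (typed_tTerm hG' (typed_transTy hG' (fun j hj => hρ j hj) hB)) (.inl rfl)

theorem typed_lam_tTerm (hG : CtxWf holSig G) (hρ : ∀ j < n, G[ρ j]? = some cTy)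
    {A B : HTy} (hA : A.tvLt n) (hB : B.tvLt n) {M : DTm}
    (hM : Typed holSig (tTerm (transTy ρ A) :: G) M ((tTerm (transTy ρ B)).shift 1 0)) :
    Typed holSig G (.lam (tTerm (transTy ρ A)) M) (tTerm (transTy ρ (A.arr B))) :=
  .conv (.abs (typed_tTerm hG (typed_transTy hG hρ hA)) hM)
    (typed_tTerm hG (typed_transTy hG hρ (A := A.arr B) ⟨hA, hB⟩))
    (.symm _ _ (conv_tTerm_tArr _ _))

theorem typed_app_tTerm (hG : CtxWf holSig G) (hρ : ∀ j < n, G[ρ j]? = some cTy)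
    {A B : HTy} (hA : A.tvLt n) (hB : B.tvLt n) {F N : DTm}
    (hF : Typed holSig G F (tTerm (transTy ρ (A.arr B))))
    (hN : Typed holSig G N (tTerm (transTy ρ A))) :
    Typed holSig G (.app F N) (tTerm (transTy ρ B)) := by
  have := Typed.app (.conv hF (typed_pi_tTerm_transTy hG hρ hA hB) (conv_tTerm_tArr _ _)) hN
  rwa [DTm.subst0_shift] at this

end TranslatedTypes

theorem length_dTermCtx : ∀ Δ : List HTy, (dTermCtx Δ).length = Δ.length
  | [] => rfl
  | _ :: Δ => congrArg (· + 1) (length_dTermCtx Δ)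

theorem getElem?_dTermCtx : ∀ {Δ : List HTy} {i : ℕ} {A : HTy}, Δ[i]? = some A →
    (dTermCtx Δ)[i]? = some (tTerm (transTy (fun j => Δ.length - (i + 1) + j) A))
  | _ :: _, 0, _, rfl => by simp [dTermCtx]
  | _ :: Δ, i + 1, _, h => by
      simpa [dTermCtx, Nat.add_sub_add_right] using getElem?_dTermCtx (Δ := Δ) h

section HolContext

variable {n : ℕ} {Δ : List HTy}

theorem getElem?_dTermCtx_append_replicate :
    ∀ j < n, (dTermCtx Δ ++ List.replicate n cTy)[Δ.length + j]? = some cTy := by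
  intro j hj
  rw [List.getElem?_append_right (by simp [length_dTermCtx])]
  simp [length_dTermCtx, hj]

theorem ctxWf_replicate_cTy : ∀ n : ℕ, CtxWf holSig (List.replicate n cTy)
  | 0 => .nil sigWf_holSig
  | n + 1 => .cons (ctxWf_replicate_cTy n) (.const (ctxWf_replicate_cTy n) rfl)

theorem ctxWf_dTermCtx_append : ∀ {Δ : List HTy}, (∀ B ∈ Δ, B.tvLt n) →
    CtxWf holSig (dTermCtx Δ ++ List.replicate n cTy)
  | [], _ => ctxWf_replicate_cTy n
  | A :: Δ, hΔ => by
      rw [List.forall_mem_cons] at hΔ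
      have hG := ctxWf_dTermCtx_append hΔ.2
      exact .cons hG (typed_tTerm hG (typed_transTy hG getElem?_dTermCtx_append_replicate hΔ.1))

theorem typed_var_dTermCtx_append (hΔ : ∀ B ∈ Δ, B.tvLt n) {i : ℕ} {A : HTy}
    (hi : Δ[i]? = some A) :
    Typed holSig (dTermCtx Δ ++ List.replicate n cTy) (.var i)
      (tTerm (transTy (fun j => Δ.length + j) A)) := by
  have hlt : i < Δ.length := (List.getElem?_eq_some_iff.1 hi).1
  have hv := Typed.var (ctxWf_dTermCtx_append hΔ)
    ((List.getElem?_append_left (by rwa [length_dTermCtx])).trans (getElem?_dTermCtx hi))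
  rwa [shift_tTerm_transTy, show (fun j => Δ.length - (i + 1) + j + (i + 1)) =
    fun j => Δ.length + j from funext fun j => by omega] at hv

theorem typed_transTm_lam (hΔ : ∀ B ∈ Δ, B.tvLt n) {A B : HTy} (hA : A.tvLt n)
    (hB : B.tvLt n) {M : HTm}
    (hM : Typed holSig (dTermCtx (A :: Δ) ++ List.replicate n cTy)
      (transTm (fun j => (A :: Δ).length + j) (fun i => i) M)
      (tTerm (transTy (fun j => (A :: Δ).length + j) B))) :
    Typed holSig (dTermCtx Δ ++ List.replicate n cTy)
      (transTm (fun j => Δ.length + j) (fun i => i) (.lam A M))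
      (tTerm (transTy (fun j => Δ.length + j) (A.arr B))) := by
  have hρ : (fun j => (A :: Δ).length + j) = fun j => Δ.length + j + 1 :=
    funext fun j => by simp only [List.length_cons]; omega
  have hid : (fun i => i) = liftVar fun i => i := funext fun | 0 => rfl | _ + 1 => rfl
  rw [hρ, hid, ← shift_tTerm_transTy] at hM
  exact typed_lam_tTerm (ctxWf_dTermCtx_append hΔ) getElem?_dTermCtx_append_replicate hA hB hM

end HolContext

/-- **Lemma 2 (paper §5).** For any HOL term `M` of HOL type `A`, with free type
variables `α₁, …, αₙ` and free term variables `x₁:A₁, …, xₖ:Aₖ`, the translation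
of `M` is well-typed at the translated type:
`Σ | α₁:type, …, αₙ:type, x₁:‖A₁‖, …, xₖ:‖Aₖ‖ ⊢ |M| : ‖A‖`. -/
theorem hol_term_translation_welltyped (n : ℕ) (Δ : List HTy) (M : HTm) (A : HTy)
    (ht : HTyped Δ M A) (hM : M.tvLt n) (hΔ : ∀ B ∈ Δ, B.tvLt n) :
    Typed holSig (dTermCtx Δ ++ List.replicate n cTy)
      (transTm (fun j => Δ.length + j) (fun i => i) M)
      (tTerm (transTy (fun j => Δ.length + j) A)) := by
  induction ht with
  | var hi => exact typed_var_dTermCtx_append hΔ hi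
  | @lam Δ A B M hMB ih =>
      have hAΔ := List.forall_mem_cons.2 ⟨hM.1, hΔ⟩
      exact typed_transTm_lam hΔ hM.1 (hMB.tvLt_type hM.2 hAΔ) (ih hM.2 hAΔ)
  | app hF _ ihF ihN =>
      have hAB := hF.tvLt_type hM.1 hΔ
      exact typed_app_tTerm (ctxWf_dTermCtx_append hΔ) getElem?_dTermCtx_append_replicate
        hAB.1 hAB.2 (ihF hM.1 hΔ) (ihN hM.2 hΔ)
  | eq =>
      have hG := ctxWf_dTermCtx_append hΔ
      have hEq : Typed holSig _ (.const 5) tyEq := .const hG rfl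
      exact .app hEq (typed_transTy hG getElem?_dTermCtx_append_replicate hM)
  | select =>
      have hG := ctxWf_dTermCtx_append hΔ
      have hSelect : Typed holSig _ (.const 6) tySelect := .const hG rfl
      exact .app hSelect (typed_transTy hG getElem?_dTermCtx_append_replicate hM)

end HolDk
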